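/- Let E be a Banach space, m ∈ ℝ, ρ ∈ ℕ, and let a : ℤⁿ → L(E) belong to the symbol class S^{m,ρ}, i.e., ‖Δ_k^α a(k)‖_{L(E)} ≤ C_α ⟨k⟩^{m−|α|} for all |α| ≤ ρ and k ∈ ℤⁿ. Let λ ∈ ℂ and suppose a(k)+λ is invertible for all k ∈ ℤⁿ with ‖(a(k)+λ)^{−1}‖_{L(E)} ≤ κ ⟨k,λ⟩^{−m}, where ⟨k,λ⟩ := (1+|k|²+|λ|^{2/m})^{1/2} and m > 0. Then for every multi-index γ with 0 < |γ| ≤ ρ there is a constant C (depending on κ, on the symbol seminorms of a, and on γ, but not on λ or k) such that ‖Δ_k^γ (a(k)+λ)^{−1}‖_{L(E)} ≤ C ⟨k,λ⟩^{−2m} ⟨k⟩^{m−|γ|} for all k ∈ ℤⁿ. -/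

import Mathlib

/-- Forward difference in the `j`-th lattice variable. -/
def fdiff {n : ℕ} {A : Type*} [AddCommGroup A]
    (j : Fin n) (h : (Fin n → ℤ) → A) : (Fin n → ℤ) → A :=
  fun k => h (k + Pi.single j 1) - h k

/-- Iterated forward difference `Δ_k^γ`. -/
def fdiffM {n : ℕ} {A : Type*} [AddCommGroup A]
    (γ : Fin n → ℕ) (h : (Fin n → ℤ) → A) : (Fin n → ℤ) → A :=
  (List.finRange n).foldr (fun j acc => (fdiff j)^[γ j] acc) h

section Structural
variable {n : ℕ} {A : Type*} [AddCommGroup A]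

lemma fdiff_add (j : Fin n) (f g : (Fin n → ℤ) → A) :
    fdiff j (f + g) = fdiff j f + fdiff j g := by
  funext k; simp [fdiff]; abel

lemma fdiff_comm (i j : Fin n) (h : (Fin n → ℤ) → A) :
    fdiff i (fdiff j h) = fdiff j (fdiff i h) := by
  funext k; simp [fdiff, add_right_comm]; abel

lemma fdiff_commute (i j : Fin n) :
    Function.Commute (fdiff (A := A) i) (fdiff j) := by
  intro h; exact (fdiff_comm i j h)

/-- Commuting an operator through `fdiffM`. -/
lemma fdiffM_comm_of (T : ((Fin n → ℤ) → A) → ((Fin n → ℤ) → A))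
    (hT : ∀ j h, T (fdiff j h) = fdiff j (T h)) (γ : Fin n → ℕ)
    (h : (Fin n → ℤ) → A) : T (fdiffM γ h) = fdiffM γ (T h) := by
  have key : ∀ (l : List (Fin n)) (h : (Fin n → ℤ) → A),
      T (l.foldr (fun j acc => (fdiff j)^[γ j] acc) h)
        = l.foldr (fun j acc => (fdiff j)^[γ j] acc) (T h) := by
    intro l
    induction l with
    | nil => intro h; rfl
    | cons i l ih =>
        intro h
        have hit : ∀ (t : ℕ) (h : (Fin n → ℤ) → A),
            T ((fdiff i)^[t] h) = (fdiff i)^[t] (T h) := by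
          intro t
          induction t with
          | zero => intro h; rfl
          | succ t iht =>
              intro h
              rw [Function.iterate_succ_apply, Function.iterate_succ_apply, ← hT, iht]
        simp only [List.foldr_cons]
        rw [hit, ih]
  exact key _ h

lemma fdiff_fdiffM (j : Fin n) (γ : Fin n → ℕ) (h : (Fin n → ℤ) → A) :
    fdiff j (fdiffM γ h) = fdiffM γ (fdiff j h) :=
  fdiffM_comm_of (fdiff j) (fun i h => fdiff_comm j i h) γ h

lemma fdiffM_neg (γ : Fin n → ℕ) (h : (Fin n → ℤ) → A) :
    fdiffM γ (-h) = -(fdiffM γ h) := by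
  have := fdiffM_comm_of (A := A) (n := n) (fun h => -h)
    (fun i h => by funext k; simp [fdiff]; abel) γ h
  exact this.symm

lemma fdiffM_add (γ : Fin n → ℕ) (f g : (Fin n → ℤ) → A) :
    fdiffM γ (f + g) = fdiffM γ f + fdiffM γ g := by
  have key : ∀ (l : List (Fin n)) (f g : (Fin n → ℤ) → A),
      l.foldr (fun j acc => (fdiff j)^[γ j] acc) (f + g)
        = l.foldr (fun j acc => (fdiff j)^[γ j] acc) f
          + l.foldr (fun j acc => (fdiff j)^[γ j] acc) g := by
    intro l
    induction l with
    | nil => intro f g; rfl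
    | cons i l ih =>
        intro f g
        have hit : ∀ (t : ℕ) (f g : (Fin n → ℤ) → A),
            (fdiff i)^[t] (f + g) = (fdiff i)^[t] f + (fdiff i)^[t] g := by
          intro t
          induction t with
          | zero => intro f g; rfl
          | succ t iht =>
              intro f g
              rw [Function.iterate_succ_apply, Function.iterate_succ_apply,
                Function.iterate_succ_apply, fdiff_add, iht]
        simp only [List.foldr_cons]
        rw [ih, hit]
  exact key _ f g

lemma fdiffM_shift (γ : Fin n → ℕ) (c : Fin n → ℤ) (h : (Fin n → ℤ) → A) :
    fdiffM γ (fun k => h (k + c)) = fun k => fdiffM γ h (k + c) := by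
  have := fdiffM_comm_of (A := A) (n := n) (fun h => fun k => h (k + c))
    (fun i h => by funext k; simp only [fdiff]; rw [add_right_comm]) γ h
  exact this.symm

lemma fdiffM_zero' (γ : Fin n → ℕ) (hγ : ∀ i, γ i = 0) (h : (Fin n → ℤ) → A) :
    fdiffM γ h = h := by
  have key : ∀ (l : List (Fin n)),
      l.foldr (fun j acc => (fdiff j)^[γ j] acc) h = h := by
    intro l
    induction l with
    | nil => rfl
    | cons i l ih => simp only [List.foldr_cons, ih, hγ i, Function.iterate_zero_apply]
  exact key _

lemma fdiffM_update_succ (γ : Fin n → ℕ) (j : Fin n) (h : (Fin n → ℤ) → A) :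
    fdiffM (Function.update γ j (γ j + 1)) h = fdiff j (fdiffM γ h) := by
  have key : ∀ (l : List (Fin n)),
      l.foldr (fun i acc => (fdiff i)^[Function.update γ j (γ j + 1) i] acc) h
        = (fdiff j)^[l.count j] (l.foldr (fun i acc => (fdiff i)^[γ i] acc) h) := by
    intro l
    induction l with
    | nil => rfl
    | cons i l ih =>
        simp only [List.foldr_cons, ih]
        by_cases hij : i = j
        · subst hij
          rw [Function.update_self, List.count_cons_self,
            ← Function.iterate_add_apply, ← Function.iterate_add_apply,
            show γ i + 1 + l.count i = l.count i + 1 + γ i from by ring]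
        · rw [Function.update_of_ne hij, List.count_cons_of_ne hij]
          exact (((fdiff_commute i j).iterate_iterate (γ i) (l.count j))) _
  have hc : (List.finRange n).count j = 1 := by
    exact List.count_eq_one_of_mem (List.nodup_finRange n) (List.mem_finRange j)
  rw [fdiffM, fdiffM, key, hc, Function.iterate_one]

end Structural

section Analytic
open Real
variable {n : ℕ} {E : Type*} [NormedAddCommGroup E] [NormedSpace ℂ E]

def Shiftable (u : (Fin n → ℤ) → ℝ) : Prop :=
  (∀ k, 0 < u k) ∧
    ∀ (j : Fin n) (k : Fin n → ℤ),
      u (k + Pi.single j 1) ≤ 2 * u k ∧ u k ≤ 2 * u (k + Pi.single j 1)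

lemma Shiftable.rpow_shift_le {u : (Fin n → ℤ) → ℝ} (hu : Shiftable u)
    (j : Fin n) (k : Fin n → ℤ) (t : ℝ) :
    u (k + Pi.single j 1) ^ t ≤ 2 ^ |t| * u k ^ t := by
  obtain ⟨hpos, hsh⟩ := hu
  obtain ⟨h1, h2⟩ := hsh j k
  rcases le_or_gt 0 t with ht | ht
  · calc u (k + Pi.single j 1) ^ t ≤ (2 * u k) ^ t :=
        Real.rpow_le_rpow (hpos _).le h1 ht
    _ = 2 ^ t * u k ^ t := Real.mul_rpow (by norm_num) (hpos k).le
    _ ≤ 2 ^ |t| * u k ^ t := by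
        have h2t : (2:ℝ) ^ t ≤ 2 ^ |t| :=
          Real.rpow_le_rpow_of_exponent_le one_le_two (le_abs_self t)
        have : (0:ℝ) ≤ u k ^ t := Real.rpow_nonneg (hpos k).le t
        nlinarith
  · have h3 : u k / 2 ≤ u (k + Pi.single j 1) := by linarith
    calc u (k + Pi.single j 1) ^ t ≤ (u k / 2) ^ t :=
        Real.rpow_le_rpow_of_nonpos (by have := hpos k; positivity) h3 ht.le
    _ = u k ^ t / 2 ^ t := Real.div_rpow (hpos k).le (by norm_num) t
    _ = 2 ^ (-t) * u k ^ t := by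
        rw [Real.rpow_neg (by norm_num : (0:ℝ) ≤ 2), div_eq_mul_inv, mul_comm]
    _ = 2 ^ |t| * u k ^ t := by rw [abs_of_neg ht]

lemma sum_update_succ (β : Fin n → ℕ) (j : Fin n) :
    ∑ i, Function.update β j (β j + 1) i = (∑ i, β i) + 1 := by
  rw [Finset.sum_update_of_mem (Finset.mem_univ j)]
  have h := Finset.add_sum_erase Finset.univ β (Finset.mem_univ j)
  rw [show (Finset.univ \ {j}) = Finset.univ.erase j from by
    rw [Finset.sdiff_singleton_eq_erase]]
  omega

end Analytic
section Leibniz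
open Real
variable {n : ℕ} {E : Type*} [NormedAddCommGroup E] [NormedSpace ℂ E]

lemma leibniz_bound :
    ∀ (N : ℕ) (α : Fin n → ℕ), (∑ i, α i) = N →
    ∀ (μ ν μ' ν' : ℝ) (c d : (Fin n → ℕ) → ℝ),
    ∃ C : ℝ, ∀ (u v : (Fin n → ℤ) → ℝ), Shiftable u → Shiftable v →
      ∀ (f g : (Fin n → ℤ) → (E →L[ℂ] E)),
      (∀ β : Fin n → ℕ, (∑ i, β i) ≤ N → ∀ k,
        ‖fdiffM β f k‖ ≤ c β * u k ^ μ * v k ^ (ν - (∑ i, β i : ℕ))) →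
      (∀ β : Fin n → ℕ, (∑ i, β i) ≤ N → ∀ k,
        ‖fdiffM β g k‖ ≤ d β * u k ^ μ' * v k ^ (ν' - (∑ i, β i : ℕ))) →
      ∀ k, ‖fdiffM α (fun l => f l * g l) k‖ ≤
        C * u k ^ (μ + μ') * v k ^ (ν + ν' - (∑ i, α i : ℕ)) := by
  intro N
  induction N using Nat.strong_induction_on with
  | _ N IH =>
  intro α hα μ ν μ' ν' c d
  rcases Nat.eq_zero_or_pos N with h0 | hNpos
  · -- base case
    subst h0
    have hz : ∀ i, α i = 0 := by
      intro i
      exact Finset.sum_eq_zero_iff.mp hα i (Finset.mem_univ i)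
    refine ⟨c α * d α, ?_⟩
    intro u v hu hv f g hf hg k
    rw [fdiffM_zero' α hz]
    have h1 := hf α (le_of_eq hα) k
    have h2 := hg α (le_of_eq hα) k
    rw [fdiffM_zero' α hz] at h1
    rw [fdiffM_zero' α hz] at h2
    have hc : 0 ≤ c α * u k ^ μ * v k ^ (ν - (∑ i, α i : ℕ)) :=
      (norm_nonneg _).trans h1
    calc ‖f k * g k‖ ≤ ‖f k‖ * ‖g k‖ := norm_mul_le _ _
      _ ≤ (c α * u k ^ μ * v k ^ (ν - (∑ i, α i : ℕ)))
          * (d α * u k ^ μ' * v k ^ (ν' - (∑ i, α i : ℕ))) :=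
        mul_le_mul h1 h2 (norm_nonneg _) hc
      _ = c α * d α * u k ^ (μ + μ') * v k ^ (ν + ν' - (∑ i, α i : ℕ)) := by
        rw [Real.rpow_add (hu.1 k), show ν + ν' - ((∑ i, α i : ℕ) : ℝ)
            = (ν - (∑ i, α i : ℕ)) + (ν' - (∑ i, α i : ℕ)) from by
          rw [hα]; push_cast; ring, Real.rpow_add (hv.1 k)]
        ring
  · -- inductive step
    obtain ⟨j, -, hj⟩ : ∃ j ∈ Finset.univ, α j ≠ 0 :=
      Finset.exists_ne_zero_of_sum_ne_zero (by omega : (∑ i, α i) ≠ 0)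
    set α' : Fin n → ℕ := Function.update α j (α j - 1) with hα'def
    have hsum' : (∑ i, α' i) = N - 1 := by
      have h := Finset.add_sum_erase Finset.univ α (Finset.mem_univ j)
      rw [hα'def, Finset.sum_update_of_mem (Finset.mem_univ j),
        show (Finset.univ \ {j}) = Finset.univ.erase j from by
          rw [Finset.sdiff_singleton_eq_erase]]
      omega
    have hupdate : Function.update α' j (α' j + 1) = α := by
      funext i
      rcases eq_or_ne i j with rfl | h
      · rw [Function.update_self, hα'def, Function.update_self]
        omega
      · rw [Function.update_of_ne h, hα'def, Function.update_of_ne h]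
    have key : ∀ h : (Fin n → ℤ) → (E →L[ℂ] E),
        fdiffM α h = fdiffM α' (fdiff j h) := by
      intro h
      rw [← fdiff_fdiffM, ← fdiffM_update_succ, hupdate]
    -- constants
    set c1 : (Fin n → ℕ) → ℝ :=
      fun β => c β * ((2:ℝ) ^ |μ| * 2 ^ (|ν| + (N:ℝ))) with hc1def
    set d1 : (Fin n → ℕ) → ℝ :=
      fun β => d (Function.update β j (β j + 1)) with hd1def
    set c2 : (Fin n → ℕ) → ℝ :=
      fun β => c (Function.update β j (β j + 1)) with hc2def
    obtain ⟨C₁, hC₁⟩ := IH (N - 1) (by omega) α' hsum' μ ν μ' (ν' - 1) c1 d1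
    obtain ⟨C₂, hC₂⟩ := IH (N - 1) (by omega) α' hsum' μ (ν - 1) μ' ν' c2 d
    refine ⟨C₁ + C₂, ?_⟩
    intro u v hu hv f g hf hg k
    -- product rule
    have prod_rule : fdiff j (fun l => f l * g l)
        = (fun l => f (l + Pi.single j 1) * fdiff j g l)
          + (fun l => fdiff j f l * g l) := by
      funext l
      simp only [fdiff, Pi.add_apply]
      rw [mul_sub, sub_mul]
      abel
    -- bounds for shifted f
    have hf1 : ∀ β : Fin n → ℕ, (∑ i, β i) ≤ N - 1 → ∀ k,
        ‖fdiffM β (fun l => f (l + Pi.single j 1)) k‖ ≤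
          c1 β * u k ^ μ * v k ^ (ν - (∑ i, β i : ℕ)) := by
      intro β hβ k
      have hcβ : 0 ≤ c β := by
        have h := (norm_nonneg _).trans (hf β (by omega) k)
        have hp : 0 < u k ^ μ * v k ^ (ν - (∑ i, β i : ℕ)) := by
          have := hu.1 k; have := hv.1 k; positivity
        nlinarith
      have e1 : u (k + Pi.single j 1) ^ μ ≤ 2 ^ |μ| * u k ^ μ :=
        hu.rpow_shift_le j k μ
      have e2 : v (k + Pi.single j 1) ^ (ν - (∑ i, β i : ℕ)) ≤
          2 ^ (|ν| + (N:ℝ)) * v k ^ (ν - (∑ i, β i : ℕ)) := by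
        refine (hv.rpow_shift_le j k _).trans ?_
        have habs : |ν - ((∑ i, β i : ℕ) : ℝ)| ≤ |ν| + (N:ℝ) := by
          refine (abs_sub ν _).trans ?_
          have : |((∑ i, β i : ℕ) : ℝ)| ≤ (N:ℝ) := by
            rw [abs_of_nonneg (by positivity)]
            exact_mod_cast le_trans hβ (by omega)
          linarith
        have h2t : (2:ℝ) ^ |ν - ((∑ i, β i : ℕ) : ℝ)| ≤ 2 ^ (|ν| + (N:ℝ)) :=
          Real.rpow_le_rpow_of_exponent_le one_le_two habs
        have : (0:ℝ) ≤ v k ^ (ν - (∑ i, β i : ℕ)) := Real.rpow_nonneg (hv.1 k).le _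
        nlinarith
      calc ‖fdiffM β (fun l => f (l + Pi.single j 1)) k‖
          = ‖fdiffM β f (k + Pi.single j 1)‖ := by
            rw [fdiffM_shift β (Pi.single j 1) f]
        _ ≤ c β * u (k + Pi.single j 1) ^ μ *
            v (k + Pi.single j 1) ^ (ν - (∑ i, β i : ℕ)) :=
          hf β (by omega) (k + Pi.single j 1)
        _ ≤ c β * (2 ^ |μ| * u k ^ μ) *
            (2 ^ (|ν| + (N:ℝ)) * v k ^ (ν - (∑ i, β i : ℕ))) := by
          apply mul_le_mul (mul_le_mul_of_nonneg_left e1 hcβ) e2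
            (Real.rpow_nonneg (hv.1 _).le _)
          have : (0:ℝ) ≤ u k ^ μ := Real.rpow_nonneg (hu.1 k).le μ
          positivity
        _ = c1 β * u k ^ μ * v k ^ (ν - (∑ i, β i : ℕ)) := by
          rw [hc1def]; ring
    -- bounds for differenced g
    have hg1 : ∀ β : Fin n → ℕ, (∑ i, β i) ≤ N - 1 → ∀ k,
        ‖fdiffM β (fdiff j g) k‖ ≤
          d1 β * u k ^ μ' * v k ^ ((ν' - 1) - (∑ i, β i : ℕ)) := by
      intro β hβ k
      have expo : (ν' - 1) - ((∑ i, β i : ℕ) : ℝ)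
          = ν' - ((∑ i, Function.update β j (β j + 1) i : ℕ) : ℝ) := by
        rw [sum_update_succ]; push_cast; ring
      rw [expo, ← fdiff_fdiffM, ← fdiffM_update_succ]
      exact hg _ (by rw [sum_update_succ]; omega) k
    -- bounds for differenced f
    have hf2 : ∀ β : Fin n → ℕ, (∑ i, β i) ≤ N - 1 → ∀ k,
        ‖fdiffM β (fdiff j f) k‖ ≤
          c2 β * u k ^ μ * v k ^ ((ν - 1) - (∑ i, β i : ℕ)) := by
      intro β hβ k
      have expo : (ν - 1) - ((∑ i, β i : ℕ) : ℝ)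
          = ν - ((∑ i, Function.update β j (β j + 1) i : ℕ) : ℝ) := by
        rw [sum_update_succ]; push_cast; ring
      rw [expo, ← fdiff_fdiffM, ← fdiffM_update_succ]
      exact hf _ (by rw [sum_update_succ]; omega) k
    have hg2 : ∀ β : Fin n → ℕ, (∑ i, β i) ≤ N - 1 → ∀ k,
        ‖fdiffM β g k‖ ≤ d β * u k ^ μ' * v k ^ (ν' - (∑ i, β i : ℕ)) :=
      fun β hβ k => hg β (by omega) k
    have B1 := hC₁ u v hu hv _ _ hf1 hg1 k
    have B2 := hC₂ u v hu hv _ _ hf2 hg2 k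
    have E1 : ν + (ν' - 1) - ((∑ i, α' i : ℕ) : ℝ)
        = ν + ν' - ((∑ i, α i : ℕ) : ℝ) := by
      rw [hsum', hα, Nat.cast_sub (by omega : 1 ≤ N)]
      push_cast; ring
    have E2 : (ν - 1) + ν' - ((∑ i, α' i : ℕ) : ℝ)
        = ν + ν' - ((∑ i, α i : ℕ) : ℝ) := by
      rw [hsum', hα, Nat.cast_sub (by omega : 1 ≤ N)]
      push_cast; ring
    rw [E1] at B1
    rw [E2] at B2
    calc ‖fdiffM α (fun l => f l * g l) k‖
        = ‖fdiffM α' (fdiff j (fun l => f l * g l)) k‖ := by rw [key]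
      _ = ‖fdiffM α' (fun l => f (l + Pi.single j 1) * fdiff j g l) k
            + fdiffM α' (fun l => fdiff j f l * g l) k‖ := by
          rw [prod_rule, fdiffM_add]; rfl
      _ ≤ ‖fdiffM α' (fun l => f (l + Pi.single j 1) * fdiff j g l) k‖
            + ‖fdiffM α' (fun l => fdiff j f l * g l) k‖ := norm_add_le _ _
      _ ≤ C₁ * u k ^ (μ + μ') * v k ^ (ν + ν' - (∑ i, α i : ℕ))
            + C₂ * u k ^ (μ + μ') * v k ^ (ν + ν' - (∑ i, α i : ℕ)) :=
        add_le_add B1 B2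
      _ = (C₁ + C₂) * u k ^ (μ + μ') * v k ^ (ν + ν' - (∑ i, α i : ℕ)) := by
        ring

end Leibniz

section Weights
open Real
variable {n : ℕ} {E : Type*} [NormedAddCommGroup E] [NormedSpace ℂ E]

lemma sum_sq_shift (j : Fin n) (k : Fin n → ℤ) :
    ((∑ i, (((k + Pi.single j 1 : Fin n → ℤ) i : ℤ) : ℝ)^2) ≤ 2 * (∑ i, ((k i : ℤ):ℝ)^2) + 2)
    ∧ ((∑ i, ((k i : ℤ):ℝ)^2) ≤ 2 * (∑ i, (((k + Pi.single j 1 : Fin n → ℤ) i : ℤ) : ℝ)^2) + 2) := by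
  have hrw : ∀ i, (((k + Pi.single j 1 : Fin n → ℤ) i : ℤ) : ℝ)
      = (k i : ℝ) + (if i = j then 1 else 0) := by
    intro i
    rcases eq_or_ne i j with rfl | h
    · simp [Pi.single_apply]
    · simp [Pi.single_apply, h]
  have hind : ∑ i, (if i = j then (1:ℝ) else 0) = 1 := by simp
  constructor
  · calc ∑ i, (((k + Pi.single j 1 : Fin n → ℤ) i : ℤ) : ℝ)^2
        = ∑ i, ((k i : ℝ) + (if i = j then 1 else 0))^2 :=
          Finset.sum_congr rfl fun i _ => by rw [hrw i]
      _ ≤ ∑ i, (2*((k i : ℝ))^2 + 2*(if i = j then 1 else 0)) := by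
          apply Finset.sum_le_sum; intro i _
          rcases eq_or_ne i j with rfl | h
          · simp only [eq_self_iff_true, if_true]; nlinarith [sq_nonneg ((k i:ℝ) - 1)]
          · simp only [if_neg h]; nlinarith [sq_nonneg (k i:ℝ)]
      _ = 2 * (∑ i, ((k i : ℤ):ℝ)^2) + 2 := by
          rw [Finset.sum_add_distrib, ← Finset.mul_sum, ← Finset.mul_sum, hind]
          norm_num
  · calc ∑ i, ((k i : ℤ):ℝ)^2
        ≤ ∑ i, (2*((k i : ℝ) + (if i = j then 1 else 0))^2
            + 2*(if i = j then 1 else 0)) := by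
          apply Finset.sum_le_sum; intro i _
          rcases eq_or_ne i j with rfl | h
          · simp only [eq_self_iff_true, if_true]; nlinarith [sq_nonneg ((k i:ℝ) + 2)]
          · simp only [if_neg h]; nlinarith [sq_nonneg (k i:ℝ)]
      _ = 2 * (∑ i, (((k + Pi.single j 1 : Fin n → ℤ) i : ℤ) : ℝ)^2) + 2 := by
          rw [show ∑ i, (((k + Pi.single j 1 : Fin n → ℤ) i : ℤ) : ℝ)^2
              = ∑ i, ((k i : ℝ) + (if i = j then 1 else 0))^2 from
            Finset.sum_congr rfl fun i _ => by rw [hrw i],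
            Finset.sum_add_distrib, ← Finset.mul_sum, ← Finset.mul_sum, hind]
          norm_num

lemma sqrt_shift_aux {S S' L : ℝ} (hS : 0 ≤ S) (hL : 0 ≤ L) (h : S' ≤ 2*S + 2) :
    Real.sqrt (1 + S' + L) ≤ 2 * Real.sqrt (1 + S + L) := by
  have h4 : Real.sqrt (4 * (1 + S + L)) = 2 * Real.sqrt (1 + S + L) := by
    rw [show (4:ℝ) = 2^2 from by norm_num, Real.sqrt_mul (by positivity),
      Real.sqrt_sq (by norm_num : (0:ℝ) ≤ 2)]
  rw [← h4]
  apply Real.sqrt_le_sqrt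
  nlinarith

lemma shiftable_sqrt (L : ℝ) (hL : 0 ≤ L) :
    Shiftable (fun k : Fin n → ℤ => Real.sqrt (1 + (∑ i, ((k i : ℤ):ℝ)^2) + L)) := by
  constructor
  · intro k
    apply Real.sqrt_pos.mpr
    have : (0:ℝ) ≤ ∑ i, ((k i : ℤ):ℝ)^2 := by positivity
    linarith
  · intro j k
    obtain ⟨h1, h2⟩ := sum_sq_shift j k
    constructor
    · exact sqrt_shift_aux (by positivity) hL h1
    · exact sqrt_shift_aux (by positivity) hL h2

lemma shiftable_w :
    Shiftable (fun k : Fin n → ℤ => Real.sqrt (1 + ∑ i, ((k i : ℤ):ℝ)^2)) := by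
  have := shiftable_sqrt (n := n) 0 le_rfl
  simpa using this

lemma resolvent_fdiff (a : (Fin n → ℤ) → (E →L[ℂ] E)) (lam : ℂ)
    (h1 : ∀ k, IsUnit (a k + lam • ContinuousLinearMap.id ℂ E)) (j : Fin n) :
    fdiff j (fun l => Ring.inverse (a l + lam • ContinuousLinearMap.id ℂ E))
      = -fun l =>
          Ring.inverse (a (l + Pi.single j 1) + lam • ContinuousLinearMap.id ℂ E)
          * (fdiff j a l * Ring.inverse (a l + lam • ContinuousLinearMap.id ℂ E)) := by
  funext l
  simp only [fdiff, Pi.neg_apply]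
  set A := a l + lam • ContinuousLinearMap.id ℂ E with hA
  set A' := a (l + Pi.single j 1) + lam • ContinuousLinearMap.id ℂ E with hA'
  have e1 : A * Ring.inverse A = 1 := Ring.mul_inverse_cancel _ (h1 l)
  have e2 : Ring.inverse A' * A' = 1 := Ring.inverse_mul_cancel _ (h1 _)
  have hda : a (l + Pi.single j 1) - a l = A' - A := by
    rw [hA, hA']; abel
  rw [hda, sub_mul, mul_sub, ← mul_assoc, e2, one_mul, e1, mul_one, neg_sub]

end Weights

section Main
open Real
variable {n : ℕ} {E : Type*} [NormedAddCommGroup E] [NormedSpace ℂ E]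

noncomputable def wt (k : Fin n → ℤ) : ℝ := Real.sqrt (1 + ∑ i, ((k i : ℤ) : ℝ)^2)

noncomputable def Wt (m : ℝ) (lam : ℂ) (k : Fin n → ℤ) : ℝ :=
  Real.sqrt (1 + (∑ i, ((k i : ℤ) : ℝ)^2) + ‖lam‖ ^ (2 / m))

lemma wt_pos (k : Fin n → ℤ) : 0 < wt k := by
  apply Real.sqrt_pos.mpr
  have : (0:ℝ) ≤ ∑ i, ((k i : ℤ):ℝ)^2 := by positivity
  linarith

lemma Wt_pos (m : ℝ) (lam : ℂ) (k : Fin n → ℤ) : 0 < Wt m lam k := by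
  apply Real.sqrt_pos.mpr
  have h1 : (0:ℝ) ≤ ∑ i, ((k i : ℤ):ℝ)^2 := by positivity
  have h2 : (0:ℝ) ≤ ‖lam‖ ^ (2 / m) :=
    Real.rpow_nonneg (norm_nonneg lam) _
  linarith

lemma wt_le_Wt (m : ℝ) (lam : ℂ) (k : Fin n → ℤ) : wt k ≤ Wt m lam k := by
  apply Real.sqrt_le_sqrt
  have h2 : (0:ℝ) ≤ ‖lam‖ ^ (2 / m) :=
    Real.rpow_nonneg (norm_nonneg lam) _
  linarith

lemma shiftable_wt : Shiftable (wt (n := n)) := shiftable_w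

lemma shiftable_Wt (m : ℝ) (lam : ℂ) : Shiftable (Wt (n := n) m lam) :=
  shiftable_sqrt _ (Real.rpow_nonneg (norm_nonneg lam) _)

theorem main_aux (ρ : ℕ) (m κ : ℝ) (hm : 0 < m) (hκ : 0 < κ)
    (a : (Fin n → ℤ) → (E →L[ℂ] E)) (Ca : (Fin n → ℕ) → ℝ)
    (ha : ∀ α : Fin n → ℕ, (∑ j, α j) ≤ ρ → ∀ k,
      ‖fdiffM α a k‖ ≤ Ca α * wt k ^ (m - (∑ j, α j : ℕ))) :
    ∀ N : ℕ, ∀ γ : Fin n → ℕ, (∑ i, γ i) = N → 0 < N → N ≤ ρ →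
      ∃ C : ℝ, ∀ lam : ℂ,
        (∀ k, IsUnit (a k + lam • ContinuousLinearMap.id ℂ E)) →
        (∀ k, ‖Ring.inverse (a k + lam • ContinuousLinearMap.id ℂ E)‖ ≤
          κ * Wt m lam k ^ (-m)) →
        ∀ k, ‖fdiffM γ
            (fun l => Ring.inverse (a l + lam • ContinuousLinearMap.id ℂ E)) k‖ ≤
          C * Wt m lam k ^ (-(2 * m)) * wt k ^ (m - (∑ i, γ i : ℕ)) := by
  intro N
  induction N using Nat.strong_induction_on with
  | _ N IH =>
  intro γ hγ hN hNρ
  obtain ⟨j, -, hj⟩ : ∃ j ∈ Finset.univ, γ j ≠ 0 :=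
    Finset.exists_ne_zero_of_sum_ne_zero (by omega : (∑ i, γ i) ≠ 0)
  set γ' : Fin n → ℕ := Function.update γ j (γ j - 1) with hγ'def
  have hsum' : (∑ i, γ' i) = N - 1 := by
    have h := Finset.add_sum_erase Finset.univ γ (Finset.mem_univ j)
    rw [hγ'def, Finset.sum_update_of_mem (Finset.mem_univ j),
      show (Finset.univ \ {j}) = Finset.univ.erase j from by
        rw [Finset.sdiff_singleton_eq_erase]]
    omega
  have hupdate : Function.update γ' j (γ' j + 1) = γ := by
    funext i
    rcases eq_or_ne i j with rfl | h
    · rw [Function.update_self, hγ'def, Function.update_self]; omega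
    · rw [Function.update_of_ne h, hγ'def, Function.update_of_ne h]
  have key : ∀ h : (Fin n → ℤ) → (E →L[ℂ] E),
      fdiffM γ h = fdiffM γ' (fdiff j h) := by
    intro h
    rw [← fdiff_fdiffM, ← fdiffM_update_succ, hupdate]
  -- uniform bounds on differences of the resolvent of lower order
  have Hu : ∀ β : Fin n → ℕ, ∃ Cb : ℝ, ∀ lam : ℂ,
      (∀ k, IsUnit (a k + lam • ContinuousLinearMap.id ℂ E)) →
      (∀ k, ‖Ring.inverse (a k + lam • ContinuousLinearMap.id ℂ E)‖ ≤
        κ * Wt m lam k ^ (-m)) →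
      (∑ i, β i) ≤ N - 1 → ∀ k,
      ‖fdiffM β
          (fun l => Ring.inverse (a l + lam • ContinuousLinearMap.id ℂ E)) k‖ ≤
        Cb * Wt m lam k ^ (-m) * wt k ^ ((0:ℝ) - (∑ i, β i : ℕ)) := by
    intro β
    rcases Nat.eq_zero_or_pos (∑ i, β i) with h0 | hpos
    · refine ⟨κ, ?_⟩
      intro lam hy1 hy2 _ k
      have hz : ∀ i, β i = 0 := fun i =>
        Finset.sum_eq_zero_iff.mp h0 i (Finset.mem_univ i)
      rw [fdiffM_zero' β hz,
        show ((0:ℝ) - ((∑ i, β i : ℕ):ℝ)) = 0 from by rw [h0]; norm_num,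
        Real.rpow_zero, mul_one]
      exact hy2 k
    · rcases le_or_gt (∑ i, β i) (N - 1) with hle | hgt
      · obtain ⟨C, hC⟩ := IH (∑ i, β i) (by omega) β rfl hpos (by omega)
        refine ⟨max C 0, ?_⟩
        intro lam hy1 hy2 _ k
        have hb := hC lam hy1 hy2 k
        have hP : 0 < Wt m lam k := Wt_pos m lam k
        have hQ : 0 < wt k := wt_pos k
        have hQP : wt k ≤ Wt m lam k := wt_le_Wt m lam k
        have e3 : Wt m lam k ^ (-m) * wt k ^ m ≤ 1 := by
          rw [Real.rpow_neg hP.le, inv_mul_le_iff₀ (Real.rpow_pos_of_pos hP m),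
            mul_one]
          exact Real.rpow_le_rpow hQ.le hQP hm.le
        have key2 : Wt m lam k ^ (-(2*m)) * wt k ^ (m - ((∑ i, β i : ℕ):ℝ)) ≤
            Wt m lam k ^ (-m) * wt k ^ ((0:ℝ) - ((∑ i, β i : ℕ):ℝ)) := by
          have e1 : Wt m lam k ^ (-(2*m))
              = Wt m lam k ^ (-m) * Wt m lam k ^ (-m) := by
            rw [← Real.rpow_add hP]; ring_nf
          have e2 : wt k ^ (m - ((∑ i, β i : ℕ):ℝ))
              = wt k ^ m * wt k ^ ((0:ℝ) - ((∑ i, β i : ℕ):ℝ)) := by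
            rw [← Real.rpow_add hQ]; ring_nf
          calc Wt m lam k ^ (-(2*m)) * wt k ^ (m - ((∑ i, β i : ℕ):ℝ))
              = (Wt m lam k ^ (-m) * wt k ^ ((0:ℝ) - ((∑ i, β i : ℕ):ℝ)))
                * (Wt m lam k ^ (-m) * wt k ^ m) := by rw [e1, e2]; ring
            _ ≤ (Wt m lam k ^ (-m) * wt k ^ ((0:ℝ) - ((∑ i, β i : ℕ):ℝ))) * 1 := by
                apply mul_le_mul_of_nonneg_left e3
                have := Real.rpow_nonneg hP.le (-m)
                have := Real.rpow_nonneg hQ.le ((0:ℝ) - ((∑ i, β i : ℕ):ℝ))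
                positivity
            _ = _ := mul_one _
        calc ‖fdiffM β
              (fun l => Ring.inverse (a l + lam • ContinuousLinearMap.id ℂ E)) k‖
            ≤ C * (Wt m lam k ^ (-(2*m)) * wt k ^ (m - ((∑ i, β i : ℕ):ℝ))) := by
              rw [← mul_assoc]; exact hb
          _ ≤ max C 0 * (Wt m lam k ^ (-m) * wt k ^ ((0:ℝ) - ((∑ i, β i : ℕ):ℝ))) := by
              apply mul_le_mul (le_max_left C 0) key2 (by positivity)
                (le_max_right C 0)
          _ = max C 0 * Wt m lam k ^ (-m) * wt k ^ ((0:ℝ) - ((∑ i, β i : ℕ):ℝ)) :=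
            (mul_assoc _ _ _).symm
      · exact ⟨0, fun lam _ _ hguard => by omega⟩
  choose Cu hCu using Hu
  -- constants for the symbol differences
  set cA : (Fin n → ℕ) → ℝ :=
    fun β => max (Ca (Function.update β j (β j + 1))) 0 with hcAdef
  -- bounds for (Δ_j a) * R
  have Hg : ∀ β : Fin n → ℕ, ∃ Db : ℝ, ∀ lam : ℂ,
      (∀ k, IsUnit (a k + lam • ContinuousLinearMap.id ℂ E)) →
      (∀ k, ‖Ring.inverse (a k + lam • ContinuousLinearMap.id ℂ E)‖ ≤
        κ * Wt m lam k ^ (-m)) →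
      (∑ i, β i) ≤ N - 1 → ∀ k,
      ‖fdiffM β (fun l => fdiff j a l *
          Ring.inverse (a l + lam • ContinuousLinearMap.id ℂ E)) k‖ ≤
        Db * Wt m lam k ^ (-m) * wt k ^ ((m - 1) - (∑ i, β i : ℕ)) := by
    intro β
    obtain ⟨C, hC⟩ := leibniz_bound (E := E) (∑ i, β i) β rfl 0 (m - 1) (-m) 0 cA Cu
    refine ⟨C, ?_⟩
    intro lam hy1 hy2 hguard k
    have hfa : ∀ β' : Fin n → ℕ, (∑ i, β' i) ≤ (∑ i, β i) → ∀ k,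
        ‖fdiffM β' (fdiff j a) k‖ ≤
          cA β' * Wt m lam k ^ (0:ℝ) * wt k ^ ((m - 1) - (∑ i, β' i : ℕ)) := by
      intro β' hβ' k
      rw [← fdiff_fdiffM, ← fdiffM_update_succ, Real.rpow_zero, mul_one]
      have hsum := sum_update_succ β' j
      have hb := ha (Function.update β' j (β' j + 1)) (by omega) k
      have expo : m - ((∑ i, Function.update β' j (β' j + 1) i : ℕ):ℝ)
          = (m - 1) - ((∑ i, β' i : ℕ):ℝ) := by
        rw [hsum]; push_cast; ring
      rw [expo] at hb
      refine hb.trans ?_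
      apply mul_le_mul_of_nonneg_right (le_max_left _ 0)
        (Real.rpow_nonneg (wt_pos k).le _)
    have hfR : ∀ β' : Fin n → ℕ, (∑ i, β' i) ≤ (∑ i, β i) → ∀ k,
        ‖fdiffM β'
            (fun l => Ring.inverse (a l + lam • ContinuousLinearMap.id ℂ E)) k‖ ≤
          Cu β' * Wt m lam k ^ (-m) * wt k ^ ((0:ℝ) - (∑ i, β' i : ℕ)) :=
      fun β' hb k => hCu β' lam hy1 hy2 (by omega) k
    have hres := hC (Wt m lam) wt (shiftable_Wt m lam) shiftable_wt
      (fdiff j a)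
      (fun l => Ring.inverse (a l + lam • ContinuousLinearMap.id ℂ E))
      hfa hfR k
    rwa [show (0:ℝ) + -m = -m from by ring,
      show m - 1 + 0 - ((∑ i, β i : ℕ):ℝ) = (m - 1) - ((∑ i, β i : ℕ):ℝ) from by
        ring] at hres
  choose DB hDB using Hg
  -- outer constants
  set cS : (Fin n → ℕ) → ℝ :=
    fun β => Cu β * ((2:ℝ) ^ m * (2:ℝ) ^ ((N:ℕ):ℝ)) with hcSdef
  obtain ⟨C, hC⟩ := leibniz_bound (E := E) (N - 1) γ' hsum' (-m) 0 (-m) (m - 1) cS DB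
  refine ⟨C, ?_⟩
  intro lam hy1 hy2 k
  have hfS : ∀ β : Fin n → ℕ, (∑ i, β i) ≤ N - 1 → ∀ k,
      ‖fdiffM β (fun l =>
          Ring.inverse (a (l + Pi.single j 1) +
            lam • ContinuousLinearMap.id ℂ E)) k‖ ≤
        cS β * Wt m lam k ^ (-m) * wt k ^ ((0:ℝ) - (∑ i, β i : ℕ)) := by
    intro β hβ k
    have hCuβ : 0 ≤ Cu β := by
      have hb := (norm_nonneg _).trans (hCu β lam hy1 hy2 hβ k)
      have hp : 0 < Wt m lam k ^ (-m) * wt k ^ ((0:ℝ) - (∑ i, β i : ℕ)) := by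
        have := Wt_pos m lam k; have := wt_pos k; positivity
      nlinarith
    have e1 : Wt m lam (k + Pi.single j 1) ^ (-m)
        ≤ 2 ^ m * Wt m lam k ^ (-m) := by
      have := (shiftable_Wt (n := n) m lam).rpow_shift_le j k (-m)
      rwa [abs_neg, abs_of_pos hm] at this
    have e2 : wt (k + Pi.single j 1) ^ ((0:ℝ) - (∑ i, β i : ℕ))
        ≤ 2 ^ ((N:ℕ):ℝ) * wt k ^ ((0:ℝ) - (∑ i, β i : ℕ)) := by
      refine ((shiftable_wt (n := n)).rpow_shift_le j k _).trans ?_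
      apply mul_le_mul_of_nonneg_right _ (Real.rpow_nonneg (wt_pos k).le _)
      apply Real.rpow_le_rpow_of_exponent_le one_le_two
      rw [zero_sub, abs_neg, abs_of_nonneg (by positivity)]
      have : (∑ i, β i) ≤ N := by omega
      exact_mod_cast this
    calc ‖fdiffM β (fun l =>
            Ring.inverse (a (l + Pi.single j 1) +
              lam • ContinuousLinearMap.id ℂ E)) k‖
        = ‖fdiffM β
            (fun l => Ring.inverse (a l + lam • ContinuousLinearMap.id ℂ E))
            (k + Pi.single j 1)‖ := by
          rw [fdiffM_shift β (Pi.single j 1)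
            (fun l => Ring.inverse (a l + lam • ContinuousLinearMap.id ℂ E))]
      _ ≤ Cu β * Wt m lam (k + Pi.single j 1) ^ (-m) *
            wt (k + Pi.single j 1) ^ ((0:ℝ) - (∑ i, β i : ℕ)) :=
        hCu β lam hy1 hy2 hβ (k + Pi.single j 1)
      _ ≤ Cu β * (2 ^ m * Wt m lam k ^ (-m)) *
            (2 ^ ((N:ℕ):ℝ) * wt k ^ ((0:ℝ) - (∑ i, β i : ℕ))) := by
          apply mul_le_mul (mul_le_mul_of_nonneg_left e1 hCuβ) e2
            (Real.rpow_nonneg (wt_pos _).le _)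
          have h1 : (0:ℝ) ≤ Wt m lam k ^ (-m) :=
            Real.rpow_nonneg (Wt_pos m lam k).le _
          positivity
      _ = cS β * Wt m lam k ^ (-m) * wt k ^ ((0:ℝ) - (∑ i, β i : ℕ)) := by
          rw [hcSdef]; ring
  have hgD : ∀ β : Fin n → ℕ, (∑ i, β i) ≤ N - 1 → ∀ k,
      ‖fdiffM β (fun l => fdiff j a l *
          Ring.inverse (a l + lam • ContinuousLinearMap.id ℂ E)) k‖ ≤
        DB β * Wt m lam k ^ (-m) * wt k ^ ((m - 1) - (∑ i, β i : ℕ)) :=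
    fun β hβ k => hDB β lam hy1 hy2 hβ k
  have hres := hC (Wt m lam) wt (shiftable_Wt m lam) shiftable_wt
    (fun l => Ring.inverse (a (l + Pi.single j 1) +
      lam • ContinuousLinearMap.id ℂ E))
    (fun l => fdiff j a l *
      Ring.inverse (a l + lam • ContinuousLinearMap.id ℂ E))
    hfS hgD k
  calc ‖fdiffM γ
        (fun l => Ring.inverse (a l + lam • ContinuousLinearMap.id ℂ E)) k‖
      = ‖fdiffM γ' (fdiff j
          (fun l => Ring.inverse (a l + lam • ContinuousLinearMap.id ℂ E))) k‖ := by
        rw [key]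
    _ = ‖fdiffM γ' (fun l =>
          Ring.inverse (a (l + Pi.single j 1) + lam • ContinuousLinearMap.id ℂ E) *
          (fdiff j a l *
            Ring.inverse (a l + lam • ContinuousLinearMap.id ℂ E))) k‖ := by
        rw [resolvent_fdiff a lam hy1 j, fdiffM_neg, Pi.neg_apply, norm_neg]
    _ ≤ C * Wt m lam k ^ (-m + -m) *
          wt k ^ ((0:ℝ) + (m - 1) - ((∑ i, γ' i : ℕ):ℝ)) := hres
    _ = C * Wt m lam k ^ (-(2 * m)) * wt k ^ (m - ((∑ i, γ i : ℕ):ℝ)) := by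
        rw [show -m + -m = -(2*m) from by ring,
          show (0:ℝ) + (m - 1) - ((∑ i, γ' i : ℕ):ℝ)
              = m - ((∑ i, γ i : ℕ):ℝ) from by
            rw [hsum', hγ, Nat.cast_sub (by omega : 1 ≤ N)]; push_cast; ring]

end Main

/-- Lemma 4.5 a): if `a ∈ S^{m,ρ}` and `a(k)+λ` is invertible with
`‖(a(k)+λ)^{−1}‖ ≤ κ ⟨k,λ⟩^{−m}`, then for `0 < |γ| ≤ ρ` there is `C`, independent
of `λ` and `k`, with `‖Δ_k^γ (a(k)+λ)^{−1}‖ ≤ C ⟨k,λ⟩^{−2m} ⟨k⟩^{m−|γ|}`. -/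
theorem resolvent_difference_estimate
    (n ρ : ℕ) (m κ : ℝ) (hm : 0 < m) (hκ : 0 < κ)
    (E : Type*) [NormedAddCommGroup E] [NormedSpace ℂ E]
    (a : (Fin n → ℤ) → (E →L[ℂ] E)) (Ca : (Fin n → ℕ) → ℝ)
    (ha : ∀ α : Fin n → ℕ, (∑ j, α j) ≤ ρ → ∀ k,
      ‖fdiffM α a k‖ ≤ Ca α *
        Real.sqrt (1 + ∑ i, (k i : ℝ) ^ 2) ^ (m - (∑ j, α j : ℕ))) :
    ∀ γ : Fin n → ℕ, 0 < (∑ j, γ j) → (∑ j, γ j) ≤ ρ →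
      ∃ C : ℝ, ∀ lam : ℂ,
        (∀ k, IsUnit (a k + lam • ContinuousLinearMap.id ℂ E)) →
        (∀ k, ‖Ring.inverse (a k + lam • ContinuousLinearMap.id ℂ E)‖ ≤
          κ * Real.sqrt (1 + (∑ i, (k i : ℝ) ^ 2) +
            ‖lam‖ ^ (2 / m)) ^ (-m)) →
        ∀ k, ‖fdiffM γ
            (fun l => Ring.inverse (a l + lam • ContinuousLinearMap.id ℂ E)) k‖ ≤
          C * Real.sqrt (1 + (∑ i, (k i : ℝ) ^ 2) +
              ‖lam‖ ^ (2 / m)) ^ (-(2 * m)) *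
            Real.sqrt (1 + ∑ i, (k i : ℝ) ^ 2) ^ (m - (∑ j, γ j : ℕ)) := by
  intro γ hpos hρ
  obtain ⟨C, hC⟩ := main_aux ρ m κ hm hκ a Ca
    (by intro α hα k; simpa [wt] using ha α hα k) (∑ j, γ j) γ rfl hpos hρ
  refine ⟨C, ?_⟩
  intro lam hy1 hy2
  have h := hC lam hy1 (by intro k; simpa [Wt] using hy2 k)
  intro k
  simpa [wt, Wt] using h k
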